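/- arXiv:1105.3361 — 3 statements merged into one kernel-verified Lean document; each statement's English description precedes it below -/
import Mathlib

section
/- Let X be a real random variable with mean μ and finite variance σ². Then for every t > √8·σ, P(|X − μ| > t) ≤ 4·P(|X| > t/4). -/
/-!
If `|μ| ≤ 3t/4`, then `|X - μ| > t` already forces `|X| > t/4`. Otherwise `|μ| > 3t/4`, and
`|X - μ| < t/2` forces `|X| > t/4`; Chebyshev's inequality together with `t² > 8σ²` shows that
this happens with probability at least `1/2`, so the right-hand side is at least `2`.
-/

open MeasureTheory ProbabilityTheory

lemma lt_abs_of_abs_le_of_lt_abs_sub {x m a b : ℝ} (hm : |m| ≤ a) (h : a + b < |x - m|) :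
    b < |x| := by
  linarith [abs_sub x m]

lemma lt_abs_of_lt_abs_of_abs_sub_lt {x m a b : ℝ} (hm : a + b < |m|) (h : |x - m| < a) :
    b < |x| := by
  linarith [abs_sub_abs_le_abs_sub m x, abs_sub_comm m x]

lemma ENNReal.one_le_four_mul_inv_two : (1 : ENNReal) ≤ 4 * 2⁻¹ := by
  rw [show (4 : ENNReal) = 2 * 2 by norm_num, mul_assoc,
    ENNReal.mul_inv_cancel two_ne_zero ENNReal.ofNat_ne_top, mul_one]
  exact one_le_two

lemma inv_two_le_measure_abs_sub_integral_lt {Ω : Type*} [MeasurableSpace Ω] {P : Measure Ω}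
    [IsProbabilityMeasure P] {X : Ω → ℝ} (hX : MemLp X 2 P) {c : ℝ} (hc : 0 < c)
    (hvar : 2 * variance X P ≤ c ^ 2) :
    2⁻¹ ≤ P {ω | |X ω - ∫ ω, X ω ∂P| < c} := by
  set A := {ω | c ≤ |X ω - ∫ ω, X ω ∂P|}
  have hA : P A ≤ 2⁻¹ := calc
    P A ≤ ENNReal.ofReal (variance X P / c ^ 2) := meas_ge_le_variance_div_sq hX hc
    _ ≤ ENNReal.ofReal 2⁻¹ := by
      gcongr
      rw [div_le_iff₀ (by positivity)]
      linarith
    _ = 2⁻¹ := by simp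
  have hcompl : Aᶜ = {ω | |X ω - ∫ ω, X ω ∂P| < c} := by
    ext ω
    simp [A]
  have hsum : 1 ≤ 2⁻¹ + P Aᶜ := calc
    1 = P Set.univ := measure_univ.symm
    _ ≤ P A + P Aᶜ := measure_univ_le_add_compl A
    _ ≤ 2⁻¹ + P Aᶜ := by gcongr
  rw [← hcompl, ← ENNReal.one_sub_inv_two]
  exact tsub_le_iff_left.mpr hsum

/-- Symmetrization bound: if `X` has mean `μ` and finite variance `σ²`, then for every
`t > √8 · σ`, `P(|X − μ| > t) ≤ 4 · P(|X| > t/4)`. -/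
theorem stmt_0 {Ω : Type*} [MeasureSpace Ω] [IsProbabilityMeasure (ℙ : Measure Ω)]
    (X : Ω → ℝ) (hX : MemLp X 2 ℙ) (μ σ : ℝ)
    (hμ : μ = ∫ ω, X ω) (hσ : σ ^ 2 = variance X ℙ) (hσ0 : 0 ≤ σ) :
    ∀ t : ℝ, Real.sqrt 8 * σ < t →
      ℙ {ω | t < |X ω - μ|} ≤ 4 * ℙ {ω | t / 4 < |X ω|} := by
  intro t ht
  have ht0 : 0 < t := lt_of_le_of_lt (by positivity) ht
  have hvar : 2 * variance X ℙ ≤ (t / 2) ^ 2 := by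
    have := mul_self_lt_mul_self (by positivity) ht
    nlinarith [Real.sq_sqrt (show (0 : ℝ) ≤ 8 by norm_num)]
  by_cases hm : |μ| ≤ 3 * t / 4
  · calc ℙ {ω | t < |X ω - μ|} ≤ ℙ {ω | t / 4 < |X ω|} :=
          measure_mono fun ω hω ↦ lt_abs_of_abs_le_of_lt_abs_sub hm (by linarith [hω.out])
      _ ≤ 4 * ℙ {ω | t / 4 < |X ω|} := le_mul_of_one_le_left' (by norm_num)
  · calc ℙ {ω | t < |X ω - μ|} ≤ 1 := prob_le_one
      _ ≤ 4 * 2⁻¹ := ENNReal.one_le_four_mul_inv_two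
      _ ≤ 4 * ℙ {ω | |X ω - μ| < t / 2} := by
          gcongr
          exact hμ ▸ inv_two_le_measure_abs_sub_integral_lt hX (by positivity) hvar
      _ ≤ 4 * ℙ {ω | t / 4 < |X ω|} := mul_le_mul_right (measure_mono fun ω hω ↦
          lt_abs_of_lt_abs_of_abs_sub_lt (by linarith) hω.out) 4
end

section
/- Under random censoring (C independent of T and Z, with S_C(t) = P(C ≥ t)), the risk-set average e(t) := E[Z 1(T∧C ≥ t)] / E[1(T∧C ≥ t)] equals the censoring-free average ẽ(t) := E[Z P(T ≥ t | Z)] / E[P(T ≥ t | Z)], for all t with E[1(T∧C≥t)] > 0. -/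
open MeasureTheory ProbabilityTheory

/-!
Write `1{t ≤ T ∧ C}` as `1{t ≤ C} · 1{t ≤ T}`. Since `C` is independent of `(T, Z)`, both the
numerator and the denominator of the risk-set average factor as `P(C ≥ t)` times the corresponding
censoring-free expectation `E[Z 1{t ≤ T}]`, resp. `E[1{t ≤ T}]`; the factor `P(C ≥ t)` cancels,
and the tower property (pulling out the `σ(Z)`-measurable `Z`) replaces `1{t ≤ T}` by
`S_T(t | Z) = E[1{t ≤ T} | Z]`.
-/

theorem integral_mul_condExp_of_stronglyMeasurable {Ω : Type*} {m m₀ : MeasurableSpace Ω}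
    {μ : Measure Ω} (hm : m ≤ m₀) [SigmaFinite (μ.trim hm)] {f g : Ω → ℝ}
    (hf : StronglyMeasurable[m] f) (hfg : Integrable (f * g) μ) (hg : Integrable g μ) :
    ∫ ω, f ω * μ[g | m] ω ∂μ = ∫ ω, f ω * g ω ∂μ :=
  calc ∫ ω, f ω * μ[g | m] ω ∂μ = ∫ ω, μ[f * g | m] ω ∂μ :=
        integral_congr_ae (condExp_mul_of_stronglyMeasurable_left hf hfg hg).symm
    _ = ∫ ω, f ω * g ω ∂μ := integral_condExp hm

theorem ProbabilityTheory.IndepFun.integral_indicator_comp_mul {Ω α β : Type*}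
    {mΩ : MeasurableSpace Ω} {mα : MeasurableSpace α} {mβ : MeasurableSpace β} {μ : Measure Ω} [IsProbabilityMeasure μ]
    {X : Ω → α} {Y : Ω → β} (hXY : IndepFun X Y μ) (hX : Measurable X) (hY : Measurable Y)
    {s : Set α} (hs : MeasurableSet s) {g : β → ℝ} (hg : Measurable g) :
    ∫ ω, s.indicator 1 (X ω) * g (Y ω) ∂μ = μ.real (X ⁻¹' s) * ∫ ω, g (Y ω) ∂μ := by
  rw [hXY.integral_fun_comp_mul_comp (f := s.indicator 1) hX.aemeasurable hY.aemeasurable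
    (measurable_const.indicator hs).aestronglyMeasurable hg.aestronglyMeasurable]
  congr 1
  simp_rw [← Set.indicator_comp_right]
  exact integral_indicator_one (hX hs)

theorem ite_le_min_eq_indicator_mul (t a c : ℝ) :
    (if t ≤ min a c then (1 : ℝ) else 0) =
      (Set.Ici t).indicator 1 c * (Set.Ici t).indicator 1 a := by
  simp only [le_min_iff, Set.indicator_apply, Set.mem_Ici, Pi.one_apply]
  split_ifs <;> simp_all

theorem integral_mul_ite_le_min_of_indepFun {Ω β : Type*} {mΩ : MeasurableSpace Ω}
    {mβ : MeasurableSpace β} {μ : Measure Ω} [IsProbabilityMeasure μ] {T C : Ω → ℝ} {Z : Ω → β}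
    (hT : Measurable T) (hC : Measurable C) (hZ : Measurable Z)
    (hindep : IndepFun C (fun ω => (T ω, Z ω)) μ) (t : ℝ) {g : β → ℝ} (hg : Measurable g) :
    ∫ ω, g (Z ω) * (if t ≤ min (T ω) (C ω) then (1 : ℝ) else 0) ∂μ =
      μ.real (C ⁻¹' Set.Ici t) * ∫ ω, g (Z ω) * {ω | t ≤ T ω}.indicator 1 ω ∂μ := by
  have hψ : Measurable fun p : ℝ × β => g p.2 * (Set.Ici t).indicator 1 p.1 :=
    (hg.comp measurable_snd).mul
      ((measurable_const.indicator measurableSet_Ici).comp measurable_fst)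
  calc ∫ ω, g (Z ω) * (if t ≤ min (T ω) (C ω) then (1 : ℝ) else 0) ∂μ
      = ∫ ω, (Set.Ici t).indicator 1 (C ω) * (g (Z ω) * (Set.Ici t).indicator 1 (T ω)) ∂μ := by
        congr with ω
        rw [ite_le_min_eq_indicator_mul]
        ring
    _ = μ.real (C ⁻¹' Set.Ici t) * ∫ ω, g (Z ω) * (Set.Ici t).indicator 1 (T ω) ∂μ :=
        hindep.integral_indicator_comp_mul hC (hT.prodMk hZ) measurableSet_Ici hψ
    _ = μ.real (C ⁻¹' Set.Ici t) * ∫ ω, g (Z ω) * {ω | t ≤ T ω}.indicator 1 ω ∂μ := rfl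

theorem stmt_11_general {Ω : Type*} [MeasureSpace Ω] [IsProbabilityMeasure (ℙ : Measure Ω)]
    (Z T C : Ω → ℝ) (hZm : Measurable Z) (hTm : Measurable T) (hCm : Measurable C)
    (hZint : Integrable Z ℙ)
    (hindep : IndepFun C (fun ω => (T ω, Z ω)) ℙ)
    (ST : ℝ → Ω → ℝ)
    (hST : ∀ t : ℝ, ST t =ᵐ[ℙ]
      ℙ[Set.indicator {ω | t ≤ T ω} (fun _ => (1 : ℝ)) |
        MeasurableSpace.comap Z Real.measurableSpace]) :
    ∀ t : ℝ, 0 < (∫ ω, if t ≤ min (T ω) (C ω) then (1 : ℝ) else 0) →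
      (∫ ω, Z ω * (if t ≤ min (T ω) (C ω) then (1 : ℝ) else 0)) /
          (∫ ω, if t ≤ min (T ω) (C ω) then (1 : ℝ) else 0) =
        (∫ ω, Z ω * ST t ω) / (∫ ω, ST t ω) := by
  intro t hpos
  have hm := hZm.comap_le
  have hsetT : MeasurableSet {ω | t ≤ T ω} := hTm measurableSet_Ici
  have hnum : ∫ ω, Z ω * (if t ≤ min (T ω) (C ω) then (1 : ℝ) else 0) =
      (ℙ : Measure Ω).real (C ⁻¹' Set.Ici t) * ∫ ω, Z ω * ST t ω := by
    have key := integral_mul_ite_le_min_of_indepFun hTm hCm hZm hindep t measurable_id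
    simp only [id] at key
    rw [key,
      integral_congr_ae ((hST t).mono fun ω h => congrArg (Z ω * ·) h),
      integral_mul_condExp_of_stronglyMeasurable hm (comap_measurable Z).stronglyMeasurable
        ((hZint.indicator hsetT).congr (.of_forall fun ω => by simp [Set.indicator_apply]))
        ((integrable_const 1).indicator hsetT)]
    rfl
  have hden : ∫ ω, (if t ≤ min (T ω) (C ω) then (1 : ℝ) else 0) =
      (ℙ : Measure Ω).real (C ⁻¹' Set.Ici t) * ∫ ω, ST t ω := by
    have := integral_mul_ite_le_min_of_indepFun hTm hCm hZm hindep t (measurable_const (a := 1))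
    simp only [one_mul] at this
    rw [this, integral_congr_ae (hST t), integral_condExp hm]
    rfl
  have hSC : (ℙ : Measure Ω).real (C ⁻¹' Set.Ici t) ≠ 0 :=
    left_ne_zero_of_mul (hden ▸ hpos.ne')
  rw [hnum, hden, mul_div_mul_left _ _ hSC]

/-- Under random censoring, the risk-set average `e(t) = E[Z 1(T∧C ≥ t)]/E[1(T∧C ≥ t)]`
equals the censoring-free average `ẽ(t) = E[Z P(T ≥ t|Z)]/E[P(T ≥ t|Z)]` whenever
`E[1(T∧C ≥ t)] > 0`. -/
theorem stmt_11 {Ω : Type*} [MeasureSpace Ω] [IsProbabilityMeasure (ℙ : Measure Ω)]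
    (Z T C : Ω → ℝ) (hZm : Measurable Z) (hTm : Measurable T) (hCm : Measurable C)
    (hZint : Integrable Z ℙ)
    (hindep : IndepFun C (fun ω => (T ω, Z ω)) ℙ)
    (ST : ℝ → Ω → ℝ)
    (hST : ∀ t : ℝ, ST t =ᵐ[ℙ]
      ℙ[Set.indicator {ω | t ≤ T ω} (fun _ => (1 : ℝ)) |
        MeasurableSpace.comap Z Real.measurableSpace])
    (hSTint : ∀ t, Integrable (fun ω => Z ω * ST t ω) ℙ) :
    ∀ t : ℝ, 0 < (∫ ω, if t ≤ min (T ω) (C ω) then (1 : ℝ) else 0) →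
      (∫ ω, Z ω * (if t ≤ min (T ω) (C ω) then (1 : ℝ) else 0)) /
          (∫ ω, if t ≤ min (T ω) (C ω) then (1 : ℝ) else 0) =
        (∫ ω, Z ω * ST t ω) / (∫ ω, ST t ω) :=
  stmt_11_general Z T C hZm hTm hCm hZint hindep ST hST
end

section
/- Let Z̃ ∈ ℝ^p have independent components, and suppose condition Y(t) = exp(−a(t) − Z̃ᵀΓ(t)) for deterministic a(t) ∈ ℝ and Γ(t) ∈ ℝ^p (conditional at-risk probability given Z̃). Define H(t) := [E(Y) E(Z̃ Z̃ᵀ Y) − E(Z̃ Y) E(Z̃ Y)ᵀ] / E(Y)². Then H(t) is diagonal, with j-th diagonal entry equal to (d/dx)(φ_j'(x)/φ_j(x)) evaluated at x = −Γ_j(t), where φ_j is the moment generating function of Z̃_j. -/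
open MeasureTheory ProbabilityTheory

/-! Weighting `ℙ` by `Y = exp (-a) * ∏ k, exp (-Γ k * Z̃ k)` keeps the components independent, each
now exponentially tilted by `exp (-Γ k * Z̃ k)`: the normalised moment `E[∏ k ∈ s, g k (Z̃ k) Y] / E[Y]`
factorises into the tilted means of the `g k (Z̃ k)`. Hence `H` is the covariance matrix of `Z̃` under
the tilted measure, which is diagonal, and its `j`-th variance is the second derivative of the
cumulant generating function `log φ_j = cgf` at `-Γ j`. -/

namespace ProbabilityTheory

open Real

variable {Ω ι : Type*} {m : MeasurableSpace Ω} {μ : Measure Ω}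

noncomputable def tiltedMean (μ : Measure Ω) (X : Ω → ℝ) (t : ℝ) (g : ℝ → ℝ) : ℝ :=
  μ[fun ω => g (X ω) * exp (t * X ω)] / mgf X μ t

lemma exp_neg_sub_sum_mul [Fintype ι] (a : ℝ) (Γ z : ι → ℝ) :
    exp (-a - ∑ k, Γ k * z k) = exp (-a) * ∏ k, exp (-Γ k * z k) := by
  simp_rw [sub_eq_add_neg, exp_add, ← Finset.sum_neg_distrib, exp_sum, neg_mul]

lemma deriv_deriv_mgf_div_mgf {X : Ω → ℝ} (h : ∀ t, Integrable (fun ω => exp (t * X ω)) μ)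
    (t : ℝ) :
    deriv (fun x => deriv (mgf X μ) x / mgf X μ x) t =
      tiltedMean μ X t (· ^ 2) - tiltedMean μ X t (fun z => z) ^ 2 := by
  have huniv : integrableExpSet X μ = Set.univ := Set.eq_univ_of_forall h
  have hint : ∀ x, x ∈ interior (integrableExpSet X μ) := fun x => by simp [huniv]
  have hcgf : (fun x => deriv (mgf X μ) x / mgf X μ x) = deriv (cgf X μ) :=
    funext fun x => by rw [deriv_cgf (hint x), deriv_mgf (hint x)]
  rw [hcgf, ← iteratedDeriv_one (f := deriv _), ← iteratedDeriv_succ',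
    iteratedDeriv_two_cgf (hint t), deriv_cgf (hint t)]
  rfl

section Independent

variable [Fintype ι] {Z : ι → Ω → ℝ}

lemma iIndepFun.integral_prod_comp_mul_exp_neg_sub_sum (hindep : iIndepFun Z μ)
    (hZ : ∀ k, Measurable (Z k)) {f : ι → ℝ → ℝ} (hf : ∀ k, Measurable (f k)) (a : ℝ)
    (Γ : ι → ℝ) :
    ∫ ω, (∏ k, f k (Z k ω)) * exp (-a - ∑ k, Γ k * Z k ω) ∂μ =
      exp (-a) * ∏ k, ∫ ω, f k (Z k ω) * exp (-Γ k * Z k ω) ∂μ := by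
  rw [← hindep.integral_fun_prod_comp (f := fun k z => f k z * exp (-Γ k * z))
    (fun k => (hZ k).aemeasurable) (fun k => by fun_prop), ← integral_const_mul]
  simp_rw [exp_neg_sub_sum_mul, Finset.prod_mul_distrib]
  congr with ω
  ring

lemma iIndepFun.integral_prod_comp_mul_exp_div (hindep : iIndepFun Z μ)
    (hZ : ∀ k, Measurable (Z k)) (a : ℝ) (Γ : ι → ℝ)
    (hmgf : ∀ k, Integrable (fun ω => exp (-Γ k * Z k ω)) μ)
    (s : Finset ι) {g : ι → ℝ → ℝ} (hg : ∀ k, Measurable (g k)) :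
    (∫ ω, (∏ k ∈ s, g k (Z k ω)) * exp (-a - ∑ k, Γ k * Z k ω) ∂μ) /
        ∫ ω, exp (-a - ∑ k, Γ k * Z k ω) ∂μ =
      ∏ k ∈ s, tiltedMean μ (Z k) (-Γ k) (g k) := by
  classical
  have := hindep.isProbabilityMeasure
  have hf : ∀ k, Measurable (if k ∈ s then g k else fun _ => 1) := fun k => by
    split_ifs
    exacts [hg k, measurable_const]
  have hnum := hindep.integral_prod_comp_mul_exp_neg_sub_sum hZ hf a Γ
  have hden := hindep.integral_prod_comp_mul_exp_neg_sub_sum hZ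
    (fun _ => measurable_const (a := (1 : ℝ))) a Γ
  simp only [ite_apply, Finset.prod_ite_mem, Finset.univ_inter, Finset.prod_const_one,
    one_mul] at hnum hden
  rw [hnum, hden, mul_div_mul_left _ _ (exp_pos _).ne', ← Finset.prod_div_distrib,
    ← Finset.prod_subset s.subset_univ]
  · refine Finset.prod_congr rfl fun k hk => ?_
    simp [hk, tiltedMean, mgf]
  · intro k _ hk
    simp only [hk, if_false, one_mul]
    exact div_self (mgf_pos (hmgf k)).ne'

end Independent

end ProbabilityTheory

theorem stmt_12_general {Ω : Type*} [MeasureSpace Ω] [IsProbabilityMeasure (ℙ : Measure Ω)]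
    {p : ℕ} (Z : Fin p → Ω → ℝ) (hZm : ∀ j, Measurable (Z j))
    (hindep : iIndepFun Z ℙ)
    (a : ℝ) (Γ : Fin p → ℝ)
    (Y : Ω → ℝ) (hYdef : ∀ ω, Y ω = Real.exp (-a - ∑ j, Γ j * Z j ω))
    (φ : Fin p → ℝ → ℝ) (hφ : ∀ j x, φ j x = ∫ ω, Real.exp (x * Z j ω))
    (hMGF : ∀ j (x : ℝ), Integrable (fun ω => Real.exp (x * Z j ω)) ℙ)
    (hYint : Integrable Y ℙ)
    (H : Matrix (Fin p) (Fin p) ℝ)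
    (hH : ∀ i j, H i j =
      ((∫ ω, Y ω) * (∫ ω, Z i ω * Z j ω * Y ω) -
        (∫ ω, Z i ω * Y ω) * (∫ ω, Z j ω * Y ω)) / (∫ ω, Y ω) ^ 2) :
    (∀ i j, i ≠ j → H i j = 0) ∧
      (∀ j, H j j = deriv (fun x => deriv (φ j) x / φ j x) (-Γ j)) := by
  obtain rfl : φ = fun j => mgf (Z j) ℙ := funext fun j => funext (hφ j)
  have hY : (∫ ω, Y ω) ≠ 0 := by
    rw [integral_congr_ae (ae_of_all _ hYdef)]
    exact (integral_exp_pos (hYint.congr (ae_of_all _ hYdef))).ne'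
  have hcov : ∀ i j, H i j = (∫ ω, Z i ω * Z j ω * Y ω) / (∫ ω, Y ω) -
      (∫ ω, Z i ω * Y ω) / (∫ ω, Y ω) * ((∫ ω, Z j ω * Y ω) / (∫ ω, Y ω)) := fun i j => by
    rw [hH]
    field_simp
  have hmean := fun s g hg =>
    hindep.integral_prod_comp_mul_exp_div hZm a Γ (fun k => hMGF k (-Γ k)) s (g := g) hg
  simp_rw [← hYdef] at hmean
  have hid := fun i => hmean {i} (fun _ z => z) (fun _ => measurable_id)
  have hsq := fun i => hmean {i} (fun _ z => z ^ 2) (fun _ => measurable_id.pow_const 2)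
  simp only [Finset.prod_singleton] at hid hsq
  refine ⟨fun i j hij => ?_, fun j => ?_⟩
  · have hpair := hmean {i, j} (fun _ z => z) (fun _ => measurable_id)
    simp only [Finset.prod_pair hij] at hpair
    rw [hcov, hpair, hid, hid, sub_self]
  · rw [hcov, deriv_deriv_mgf_div_mgf (hMGF j), hid, ← hsq]
    simp_rw [← sq]

/-- For independent components `Z̃_j` with finite MGFs `φ_j` and at-risk probability
`Y = exp(−a − Z̃ᵀΓ)`, the matrix `H = [E(Y)E(Z̃Z̃ᵀY) − (E(Z̃Y))⊗²]/E(Y)²` is diagonal with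
`H_jj = (φ_j'/φ_j)'(−Γ_j)`. -/
theorem stmt_12 {Ω : Type*} [MeasureSpace Ω] [IsProbabilityMeasure (ℙ : Measure Ω)]
    {p : ℕ} (Z : Fin p → Ω → ℝ) (hZm : ∀ j, Measurable (Z j))
    (hindep : iIndepFun Z ℙ)
    (a : ℝ) (Γ : Fin p → ℝ)
    (Y : Ω → ℝ) (hYdef : ∀ ω, Y ω = Real.exp (-a - ∑ j, Γ j * Z j ω))
    (φ : Fin p → ℝ → ℝ) (hφ : ∀ j x, φ j x = ∫ ω, Real.exp (x * Z j ω))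
    (hMGF : ∀ j (x : ℝ), Integrable (fun ω => Real.exp (x * Z j ω)) ℙ)
    (hYint : Integrable Y ℙ)
    (hZY : ∀ i, Integrable (fun ω => Z i ω * Y ω) ℙ)
    (hZZY : ∀ i j, Integrable (fun ω => Z i ω * Z j ω * Y ω) ℙ)
    (H : Matrix (Fin p) (Fin p) ℝ)
    (hH : ∀ i j, H i j =
      ((∫ ω, Y ω) * (∫ ω, Z i ω * Z j ω * Y ω) -
        (∫ ω, Z i ω * Y ω) * (∫ ω, Z j ω * Y ω)) / (∫ ω, Y ω) ^ 2) :
    (∀ i j, i ≠ j → H i j = 0) ∧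
      (∀ j, H j j = deriv (fun x => deriv (φ j) x / φ j x) (-Γ j)) :=
  stmt_12_general Z hZm hindep a Γ Y hYdef φ hφ hMGF hYint H hH
end
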